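/- Let (X, μ) be a measure space with finite total mass m₀ := μ(X) ∈ (0, ∞), let p, q be real with 1 < p < 2 and 1 ≤ q ≤ p, and let u : X → ℝ belong to L^p(μ). Set ū := (1/m₀) ∫_X u dμ. Then (∫_X |u|^p dμ)^{q/p} ≤ m₀^{q/p − q} |∫_X u dμ|^q + (1 + p (p−1)^{p−1})^{q/p} (∫_X |u − ū|^p dμ)^{q/p}. -/

import Mathlib

/-!
For `1 < p ≤ 2` one has the pointwise inequality
`|1 + t| ^ p ≤ 1 + p t + (1 + p (p - 1) ^ (p - 1)) |t| ^ p`, proved by monotonicity on each side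
of `0` for `t ≥ -1`, and by a Young-type inequality for `t < -1`. By homogeneity it gives
`|a + b| ^ p ≤ |a| ^ p + k b + C |b| ^ p` with `k` depending only on `a`. Taking `a = ū` and
`b = u - ū`, the linear term integrates to zero, so
`∫ |u| ^ p ≤ m₀ |ū| ^ p + C ∫ |u - ū| ^ p`; raising to the power `q / p ≤ 1`, which is
subadditive, yields the claim.
-/

open MeasureTheory Real

lemma one_add_rpow_le_of_nonneg {p t : ℝ} (hp1 : 1 ≤ p) (hp2 : p ≤ 2) (ht : 0 ≤ t) :
    (1 + t) ^ p ≤ 1 + p * t + t ^ p := by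
  have hp0 : 0 ≤ p := by linarith
  let g : ℝ → ℝ := fun t ↦ 1 + p * t + t ^ p - (1 + t) ^ p
  have hg : MonotoneOn g (Set.Ici 0) := by
    refine monotoneOn_of_hasDerivWithinAt_nonneg (convex_Ici 0)
      (f' := fun x ↦ p + p * x ^ (p - 1) - p * (1 + x) ^ (p - 1)) ?_ ?_ ?_
    · exact Continuous.continuousOn <| by fun_prop (disch := assumption)
    all_goals intro x hx; rw [interior_Ici] at hx; have hx : 0 < x := hx
    · have h1 := ((hasDerivAt_id x).const_mul p).const_add 1
      have h2 := hasDerivAt_rpow_const (p := p) (Or.inl hx.ne')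
      have h3 := ((hasDerivAt_id x).const_add 1).rpow_const (p := p) (Or.inl (by simp; linarith))
      exact (((h1.add h2).sub h3).congr_deriv (by simp)).hasDerivWithinAt
    · -- concavity of `x ↦ x ^ (p - 1)` makes it subadditive
      have := rpow_add_le_add_rpow zero_le_one hx.le (by linarith : 0 ≤ p - 1) (by linarith)
      rw [one_rpow] at this
      nlinarith
  simpa [g, zero_rpow (by linarith : p ≠ 0)] using hg Set.self_mem_Ici ht ht

lemma one_sub_rpow_le {p s : ℝ} (hp0 : 0 < p) (hp2 : p ≤ 2) (hs0 : 0 ≤ s) (hs1 : s ≤ 1) :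
    (1 - s) ^ p ≤ 1 - p * s + s ^ p := by
  let g : ℝ → ℝ := fun s ↦ 1 - p * s + s ^ p - (1 - s) ^ p
  have hg : MonotoneOn g (Set.Icc 0 1) := by
    refine monotoneOn_of_hasDerivWithinAt_nonneg (convex_Icc 0 1)
      (f' := fun x ↦ -p + p * x ^ (p - 1) + p * (1 - x) ^ (p - 1)) ?_ ?_ ?_
    · have hp0 := hp0.le
      exact Continuous.continuousOn <| by fun_prop (disch := assumption)
    all_goals intro x hx; rw [interior_Icc] at hx; obtain ⟨hx0, hx1⟩ := hx
    · have h1 := ((hasDerivAt_id x).const_mul p).const_sub 1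
      have h2 := hasDerivAt_rpow_const (p := p) (Or.inl hx0.ne')
      have h3 := ((hasDerivAt_id x).const_sub 1).rpow_const (p := p)
        (Or.inl (by simp; linarith))
      exact (((h1.add h2).sub h3).congr_deriv (by simp)).hasDerivWithinAt
    · have e1 : x ≤ x ^ (p - 1) := by
        simpa using rpow_le_rpow_of_exponent_ge hx0 hx1.le (by linarith : p - 1 ≤ 1)
      have e2 : 1 - x ≤ (1 - x) ^ (p - 1) := by
        simpa using rpow_le_rpow_of_exponent_ge (by linarith : 0 < 1 - x) (by linarith)
          (by linarith : p - 1 ≤ 1)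
      nlinarith
  simpa [g, zero_rpow hp0.ne'] using hg (Set.left_mem_Icc.2 zero_le_one) ⟨hs0, hs1⟩ hs0

lemma mul_le_one_add_rpow {p s : ℝ} (hp1 : 1 < p) (hs : 0 ≤ s) :
    p * s ≤ 1 + (p - 1) ^ (p - 1) * s ^ p := by
  have hp : 0 < p - 1 := by linarith
  -- Bernoulli's inequality at the point `1 / (p - 1)` where the two sides touch
  have h := one_add_mul_self_le_rpow_one_add (s := (p - 1) * s - 1) (by nlinarith) hp1.le
  rw [add_sub_cancel, mul_rpow hp.le hs] at h
  have e : (p - 1) ^ p = (p - 1) * (p - 1) ^ (p - 1) := by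
    rw [rpow_sub_one hp.ne']; field_simp
  rw [e] at h
  nlinarith [rpow_nonneg hp.le (p - 1), rpow_nonneg hs p]

lemma mul_sub_one_rpow_nonneg {p : ℝ} (hp : 1 ≤ p) : 0 ≤ p * (p - 1) ^ (p - 1) :=
  mul_nonneg (by linarith) (rpow_nonneg (by linarith) _)

lemma abs_one_add_rpow_le {p : ℝ} (hp1 : 1 < p) (hp2 : p ≤ 2) (t : ℝ) :
    |1 + t| ^ p ≤ 1 + p * t + (1 + p * (p - 1) ^ (p - 1)) * |t| ^ p := by
  have hC := mul_sub_one_rpow_nonneg hp1.le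
  rcases le_or_gt 0 t with ht | ht
  · rw [abs_of_nonneg (by linarith), abs_of_nonneg ht]
    nlinarith [one_add_rpow_le_of_nonneg hp1.le hp2 ht, rpow_nonneg ht p]
  have hs : 0 ≤ -t := by linarith
  rcases le_or_gt (-1) t with ht1 | ht1
  · rw [abs_of_nonneg (by linarith), abs_of_neg ht]
    have h := one_sub_rpow_le (by linarith) hp2 hs (by linarith)
    rw [sub_neg_eq_add] at h
    nlinarith [rpow_nonneg hs p]
  · -- here `|1 + t| ≤ |t|`, and the linear term is absorbed by `mul_le_one_add_rpow`
    rw [abs_of_neg (by linarith), abs_of_neg ht]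
    have hmono : (-(1 + t)) ^ p ≤ (-t) ^ p :=
      rpow_le_rpow (by linarith) (by linarith) (by linarith)
    have hA : 0 ≤ (p - 1) * ((p - 1) ^ (p - 1) * (-t) ^ p) :=
      mul_nonneg (by linarith) (mul_nonneg (rpow_nonneg (by linarith) _) (rpow_nonneg hs p))
    nlinarith [mul_le_one_add_rpow hp1 hs]

-- `p * (|a| ^ p / a)` is the derivative of `|·| ^ p` at `a`, and `0` at `a = 0`.
lemma abs_add_rpow_le {p : ℝ} (hp1 : 1 < p) (hp2 : p ≤ 2) (a b : ℝ) :
    |a + b| ^ p ≤ |a| ^ p + p * (|a| ^ p / a) * b + (1 + p * (p - 1) ^ (p - 1)) * |b| ^ p := by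
  have hC := mul_sub_one_rpow_nonneg hp1.le
  rcases eq_or_ne a 0 with rfl | ha
  · simp [zero_rpow (by linarith : p ≠ 0)]
    nlinarith [rpow_nonneg (abs_nonneg b) p]
  have ha' : 0 < |a| := abs_pos.2 ha
  have hsplit : a + b = a * (1 + b / a) := by field_simp
  calc |a + b| ^ p = |a| ^ p * |1 + b / a| ^ p := by
        rw [hsplit, abs_mul, mul_rpow (abs_nonneg _) (abs_nonneg _)]
    _ ≤ |a| ^ p * (1 + p * (b / a) + (1 + p * (p - 1) ^ (p - 1)) * |b / a| ^ p) :=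
        mul_le_mul_of_nonneg_left (abs_one_add_rpow_le hp1 hp2 _) (by positivity)
    _ = _ := by
        rw [abs_div, div_rpow (abs_nonneg _) ha'.le]
        field_simp

lemma MeasureTheory.MemLp.integrable_abs_rpow {X : Type*} [MeasurableSpace X] {μ : Measure X}
    {p : ℝ} (hp : 0 < p) {f : X → ℝ} (hf : MemLp f (ENNReal.ofReal p) μ) :
    Integrable (fun x ↦ |f x| ^ p) μ := by
  simpa [ENNReal.toReal_ofReal hp.le] using
    hf.integrable_norm_rpow (by simpa using hp) ENNReal.ofReal_ne_top

lemma integral_abs_const_add_rpow_le {X : Type*} [MeasurableSpace X] {μ : Measure X}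
    [IsFiniteMeasure μ] {p : ℝ} (hp1 : 1 < p) (hp2 : p ≤ 2) (c : ℝ) {w : X → ℝ}
    (hw : MemLp w (ENNReal.ofReal p) μ) (hw0 : ∫ x, w x ∂μ = 0) :
    ∫ x, |c + w x| ^ p ∂μ ≤
      μ.real Set.univ * |c| ^ p + (1 + p * (p - 1) ^ (p - 1)) * ∫ x, |w x| ^ p ∂μ := by
  have hp0 : 0 < p := by linarith
  have hwi : Integrable w μ := hw.integrable (by simpa using hp1.le)
  have hlin : Integrable (fun x ↦ |c| ^ p + p * (|c| ^ p / c) * w x) μ :=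
    (integrable_const _).add (hwi.const_mul _)
  have hrem := (hw.integrable_abs_rpow hp0).const_mul (1 + p * (p - 1) ^ (p - 1))
  calc ∫ x, |c + w x| ^ p ∂μ
      ≤ ∫ x, (|c| ^ p + p * (|c| ^ p / c) * w x)
          + (1 + p * (p - 1) ^ (p - 1)) * |w x| ^ p ∂μ :=
        integral_mono (((memLp_const c).add hw).integrable_abs_rpow hp0) (hlin.add hrem)
          fun x ↦ abs_add_rpow_le hp1 hp2 c (w x)
    _ = _ := by
        rw [integral_add hlin hrem, integral_add (integrable_const _) (hwi.const_mul _),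
          integral_const, integral_const_mul, integral_const_mul, hw0, smul_eq_mul]
        ring

lemma mul_abs_one_div_mul_rpow_rpow_div {m p : ℝ} (hm : 0 < m) (hp : p ≠ 0) (a q : ℝ) :
    (m * |1 / m * a| ^ p) ^ (q / p) = m ^ (q / p - q) * |a| ^ q := by
  rw [mul_rpow hm.le (by positivity), ← rpow_mul (abs_nonneg _), mul_div_cancel₀ q hp,
    abs_mul, abs_of_pos (by positivity), mul_rpow (by positivity) (abs_nonneg a), one_div,
    inv_rpow hm.le, ← rpow_neg hm.le, ← mul_assoc, ← rpow_add hm, ← sub_eq_add_neg]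

theorem stmt_12 {X : Type*} [MeasurableSpace X] (μ : Measure X)
    [IsFiniteMeasure μ] (m₀ : ℝ) (hm₀ : m₀ = (μ Set.univ).toReal)
    (hm₀pos : 0 < m₀) (p q : ℝ) (hp1 : 1 < p) (hp2 : p < 2)
    (hq1 : 1 ≤ q) (hqp : q ≤ p) (u : X → ℝ)
    (hu : MemLp u (ENNReal.ofReal p) μ) :
    (∫ x, |u x| ^ p ∂μ) ^ (q / p) ≤
      m₀ ^ (q / p - q) * |∫ x, u x ∂μ| ^ q +
        (1 + p * (p - 1) ^ (p - 1)) ^ (q / p) *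
          (∫ x, |u x - (1 / m₀) * ∫ y, u y ∂μ| ^ p ∂μ) ^ (q / p) := by
  set ū := 1 / m₀ * ∫ y, u y ∂μ with hū
  have hC := mul_sub_one_rpow_nonneg hp1.le
  have hr : 0 ≤ q / p := div_nonneg (by linarith) (by linarith)
  have hdev : 0 ≤ ∫ x, |u x - ū| ^ p ∂μ := integral_nonneg fun _ ↦ by positivity
  have hmean : ∫ x, (u x - ū) ∂μ = 0 := by
    rw [integral_sub (hu.integrable (by simpa using hp1.le)) (integrable_const ū), integral_const,
      measureReal_def, ← hm₀, smul_eq_mul, hū]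
    field_simp
    ring
  have hLp := integral_abs_const_add_rpow_le hp1 hp2.le ū (w := fun x ↦ u x - ū)
    (hu.sub (memLp_const ū)) hmean
  simp only [add_sub_cancel, measureReal_def, ← hm₀] at hLp
  calc (∫ x, |u x| ^ p ∂μ) ^ (q / p)
      ≤ (m₀ * |ū| ^ p + (1 + p * (p - 1) ^ (p - 1)) * ∫ x, |u x - ū| ^ p ∂μ) ^ (q / p) :=
        rpow_le_rpow (integral_nonneg fun _ ↦ by positivity) hLp hr
    _ ≤ (m₀ * |ū| ^ p) ^ (q / p)
        + ((1 + p * (p - 1) ^ (p - 1)) * ∫ x, |u x - ū| ^ p ∂μ) ^ (q / p) :=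
        rpow_add_le_add_rpow (by positivity) (by positivity) hr
          ((div_le_one (by linarith)).2 hqp)
    _ = _ := by
        rw [mul_abs_one_div_mul_rpow_rpow_div hm₀pos (by linarith), mul_rpow (by linarith) hdev]
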